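/- Let K ⊆ ℝⁿ be a pointed closed convex cone whose set of extreme rays is countable. Then the Carathéodory number of K equals dim K, and the longest chain of faces of K has length dim K + 1. -/

import Mathlib

open Module Set
set_option linter.unusedSectionVars false
set_option maxHeartbeats 1000000


/-- The dimension of a set: the linear dimension of its affine hull. -/
noncomputable def setDim {E : Type*} [AddCommGroup E] [Module ℝ E] (S : Set E) : ℕ :=
  Module.finrank ℝ (vectorSpan ℝ S)

/-- `F` is a face of the convex set `S`: a convex subset such that whenever a point of the
open segment between `x, y ∈ S` lies in `F`, both endpoints lie in `F`. -/
def IsFaceOf {E : Type*} [AddCommGroup E] [Module ℝ E] (S F : Set E) : Prop :=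
  F ⊆ S ∧ Convex ℝ F ∧ ∀ ⦃x⦄, x ∈ S → ∀ ⦃y⦄, y ∈ S → ∀ ⦃a : ℝ⦄, 0 < a → a < 1 →
    a • x + (1 - a) • y ∈ F → x ∈ F ∧ y ∈ F

/-- An extreme ray of `K` is a one-dimensional face. -/
def IsExtremeRay {E : Type*} [AddCommGroup E] [Module ℝ E] (K R : Set E) : Prop :=
  IsFaceOf K R ∧ setDim R = 1

/-- `x` is a sum of at most `k` elements, each belonging to an extreme ray of `K`. -/
def IsSumOfExtremeRayElems {E : Type*} [AddCommGroup E] [Module ℝ E]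
    (K : Set E) (k : ℕ) (x : E) : Prop :=
  ∃ m : ℕ, m ≤ k ∧ ∃ f : Fin m → E,
    (∀ i, ∃ R : Set E, IsExtremeRay K R ∧ f i ∈ R) ∧ x = ∑ i, f i

/-- There is a chain of `l` nonempty faces of `S`, each properly containing the next. -/
def HasFaceChainOfLength {E : Type*} [AddCommGroup E] [Module ℝ E] (S : Set E) (l : ℕ) : Prop :=
  ∃ c : Fin l → Set E, StrictAnti c ∧ ∀ i, IsFaceOf S (c i) ∧ (c i).Nonempty

/-- `l` is the length of the longest chain of nonempty faces of `S`. -/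
def IsLongestFaceChainLength {E : Type*} [AddCommGroup E] [Module ℝ E] (S : Set E) (l : ℕ) : Prop :=
  HasFaceChainOfLength S l ∧ ∀ m, HasFaceChainOfLength S m → m ≤ l

/-- `k` is the Carathéodory number of `K`: every element of `K` is a sum of at most `k`
elements of extreme rays of `K`, and `k` is minimal with this property. -/
def IsCaratheodoryNumber {E : Type*} [AddCommGroup E] [Module ℝ E] (K : Set E) (k : ℕ) : Prop :=
  (∀ x ∈ K, IsSumOfExtremeRayElems K k x) ∧
    ∀ j : ℕ, (∀ x ∈ K, IsSumOfExtremeRayElems K j x) → k ≤ j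


variable {E : Type*} [NormedAddCommGroup E] [InnerProductSpace ℝ E] [FiniteDimensional ℝ E]

/-- Baire-type avoidance: a nonempty open set is not covered by countably many proper
subspaces. -/
lemma exists_avoid_subspaces {ι : Type*} [Countable ι] (O : Set E) (hO : IsOpen O)
    (hne : O.Nonempty) (W : ι → Submodule ℝ E) (hW : ∀ i, W i ≠ ⊤) :
    ∃ x ∈ O, ∀ i, x ∉ W i := by
  have hme : IsMeagre (⋃ i, (W i : Set E)) := by
    rw [isMeagre_iff_countable_union_isNowhereDense]
    refine ⟨Set.range (fun i => (W i : Set E)), ?_, Set.countable_range _, by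
      rw [Set.sUnion_range]⟩
    rintro t ⟨i, rfl⟩
    rw [(W i).closed_of_finiteDimensional.isNowhereDense_iff]
    rw [Set.eq_empty_iff_forall_notMem]
    intro x hx
    exact hW i ((W i).eq_top_of_nonempty_interior' ⟨x, hx⟩)
  have hd : Dense (⋃ i, (W i : Set E))ᶜ := dense_of_mem_residual hme
  obtain ⟨x, hx, hxO⟩ := hd.exists_mem_open hO hne
  exact ⟨x, hxO, by simpa using hx⟩

section Faces

variable {C F G R : Set E}

lemma isFaceOf_self (hC : Convex ℝ C) : IsFaceOf C C :=
  ⟨subset_rfl, hC, fun _ hx _ hy _ _ _ _ => ⟨hx, hy⟩⟩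

lemma IsFaceOf.trans (hF : IsFaceOf C F) (hR : IsFaceOf F R) : IsFaceOf C R := by
  refine ⟨hR.1.trans hF.1, hR.2.1, fun x hx y hy a ha0 ha1 hm => ?_⟩
  obtain ⟨hxF, hyF⟩ := hF.2.2 hx hy ha0 ha1 (hR.1 hm)
  exact hR.2.2 hxF hyF ha0 ha1 hm

variable (hC : Convex ℝ C) (hcone : ∀ c : ℝ, 0 ≤ c → ∀ y ∈ C, c • y ∈ C) (h0 : (0 : E) ∈ C)

include hcone h0 in
lemma IsFaceOf.zero_mem (hF : IsFaceOf C F) (hne : F.Nonempty) : (0 : E) ∈ F := by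
  obtain ⟨x, hx⟩ := hne
  have h2x : (2 : ℝ) • x ∈ C := hcone 2 (by norm_num) x (hF.1 hx)
  have : (1/2 : ℝ) • ((2:ℝ) • x) + (1 - 1/2 : ℝ) • (0 : E) ∈ F := by
    rw [smul_smul]; norm_num; exact hx
  exact (hF.2.2 h2x h0 (by norm_num) (by norm_num) this).2

include hcone h0 in
lemma IsFaceOf.smul_mem (hF : IsFaceOf C F) {c : ℝ} (hc : 0 ≤ c) {x : E} (hx : x ∈ F) :
    c • x ∈ F := by
  have h0F : (0 : E) ∈ F := hF.zero_mem hcone h0 ⟨x, hx⟩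
  rcases lt_trichotomy c 1 with h1 | h1 | h1
  · rcases eq_or_lt_of_le hc with h | h
    · rw [← h, zero_smul]; exact h0F
    · have hcomb : c • x + (1 - c) • (0 : E) ∈ F := hF.2.1 hx h0F h.le (by linarith) (by ring)
      simpa using hcomb
  · rw [h1, one_smul]; exact hx
  · have hcx : c • x ∈ C := hcone c hc x (hF.1 hx)
    have hm : (1/c : ℝ) • (c • x) + (1 - 1/c : ℝ) • (0 : E) ∈ F := by
      rw [smul_smul, one_div_mul_cancel (by linarith), one_smul, smul_zero, add_zero]
      exact hx
    exact (hF.2.2 hcx h0 (by positivity) (by rw [div_lt_one] <;> linarith) hm).1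

include hcone h0 in
lemma IsFaceOf.add_mem (hF : IsFaceOf C F) {x y : E} (hx : x ∈ F) (hy : y ∈ F) :
    x + y ∈ F := by
  have := hF.2.1 hx hy (le_of_lt one_half_pos) (le_of_lt one_half_pos) (by norm_num)
  have h2 := hF.smul_mem hcone h0 (c := 2) (by norm_num) this
  rw [smul_add, smul_smul, smul_smul] at h2
  norm_num at h2
  convert h2 using 2 <;> norm_num

include hcone h0 in
lemma IsFaceOf.span_sub (hF : IsFaceOf C F) (hne : F.Nonempty) {g : E}
    (hg : g ∈ Submodule.span ℝ F) : ∃ a ∈ F, ∃ b ∈ F, g = a - b := by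
  have h0F : (0 : E) ∈ F := hF.zero_mem hcone h0 hne
  induction hg using Submodule.span_induction with
  | mem x hx => exact ⟨x, hx, 0, h0F, by simp⟩
  | zero => exact ⟨0, h0F, 0, h0F, by simp⟩
  | add x y _ _ hx hy =>
    obtain ⟨a, ha, b, hb, rfl⟩ := hx
    obtain ⟨a', ha', b', hb', rfl⟩ := hy
    exact ⟨a + a', hF.add_mem hcone h0 ha ha', b + b', hF.add_mem hcone h0 hb hb', by abel⟩
  | smul c x _ hx =>
    obtain ⟨a, ha, b, hb, rfl⟩ := hx
    rcases le_or_gt 0 c with h | h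
    · exact ⟨c • a, hF.smul_mem hcone h0 h ha, c • b, hF.smul_mem hcone h0 h hb, by
        rw [smul_sub]⟩
    · exact ⟨(-c) • b, hF.smul_mem hcone h0 (by linarith) hb,
        (-c) • a, hF.smul_mem hcone h0 (by linarith) ha, by rw [smul_sub]; module⟩

include hcone h0 in
lemma IsFaceOf.subset_of_span_le (hF : IsFaceOf C F) (hG : IsFaceOf C G) (hne : F.Nonempty)
    (hle : (G : Set E) ⊆ (Submodule.span ℝ F : Set E)) : G ⊆ F := by
  intro g hg
  obtain ⟨a, ha, b, hb, hab⟩ := hF.span_sub hcone h0 hne (hle hg)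
  have h2g : (2 : ℝ) • g ∈ C := hcone 2 (by norm_num) g (hG.1 hg)
  have h2b : (2 : ℝ) • b ∈ C := hcone 2 (by norm_num) b (hF.1 (hb))
  have hmid : (1/2 : ℝ) • ((2:ℝ) • g) + (1 - 1/2 : ℝ) • ((2:ℝ) • b) ∈ F := by
    have : (1/2 : ℝ) • ((2:ℝ) • g) + (1 - 1/2 : ℝ) • ((2:ℝ) • b) = g + b := by
      norm_num; module
    rw [this]
    have : g + b = a := by rw [hab]; abel
    rw [this]; exact ha
  have := (hF.2.2 h2g h2b (by norm_num) (by norm_num) hmid).1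
  have h := hF.smul_mem hcone h0 (c := 1/2) (by norm_num) this
  rw [smul_smul] at h; norm_num at h; exact h

end Faces

lemma vectorSpan_eq_span {S : Set E} (h0 : (0 : E) ∈ S) :
    vectorSpan ℝ S = Submodule.span ℝ S := by
  apply le_antisymm
  · rw [vectorSpan_def]
    rw [Submodule.span_le]
    rintro v ⟨a, ha, b, hb, rfl⟩
    exact sub_mem (Submodule.subset_span ha) (Submodule.subset_span hb)
  · rw [Submodule.span_le]
    intro x hx
    have : x - 0 ∈ vectorSpan ℝ S := vsub_mem_vectorSpan ℝ hx h0
    simpa using this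

section Chunk2
variable {E : Type*} [NormedAddCommGroup E] [InnerProductSpace ℝ E] [FiniteDimensional ℝ E]

lemma conic_caratheodory (m : ℕ) : ∀ (v : Fin m → E) (c : Fin m → ℝ), (∀ i, 0 ≤ c i) →
    ∃ (l : ℕ) (w : Fin l → E) (b : Fin l → ℝ), (∀ j, 0 ≤ b j) ∧ LinearIndependent ℝ w ∧
      (∀ j, ∃ i, w j = v i) ∧ ∑ j, b j • w j = ∑ i, c i • v i := by
  induction m using Nat.strong_induction_on with
  | _ m IH =>
    intro v c hc
    by_cases hli : LinearIndependent ℝ v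
    · exact ⟨m, v, c, hc, hli, fun j => ⟨j, rfl⟩, rfl⟩
    match m with
    | 0 => exact absurd linearIndependent_empty_type hli
    | m' + 1 =>
      obtain ⟨g, hgsum, i1, hgi1⟩ := Fintype.not_linearIndependent_iff.mp hli
      obtain ⟨g, hgsum, i1, hgi1⟩ : ∃ g : Fin (m' + 1) → ℝ, ∑ i, g i • v i = 0 ∧
          ∃ i, 0 < g i := by
        rcases hgi1.lt_or_gt with h | h
        · exact ⟨-g, by simpa using hgsum, i1, by simpa using h⟩
        · exact ⟨g, hgsum, i1, h⟩
      have hSne : (Finset.univ.filter (fun i => 0 < g i)).Nonempty :=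
        ⟨i1, by simpa using hgi1⟩
      obtain ⟨i₀, hi₀S, hmin⟩ := Finset.exists_min_image _ (fun i => c i / g i) hSne
      have hgi₀ : 0 < g i₀ := by simpa using (Finset.mem_filter.mp hi₀S).2
      set r := c i₀ / g i₀ with hr_def
      have hr : 0 ≤ r := div_nonneg (hc _) hgi₀.le
      set c' := fun i => c i - r * g i with hc'_def
      have hc' : ∀ i, 0 ≤ c' i := by
        intro i
        by_cases hgi : 0 < g i
        · have := hmin i (Finset.mem_filter.mpr ⟨Finset.mem_univ _, hgi⟩)
          have := (le_div_iff₀ hgi).mp this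
          simp only [hc'_def]; linarith
        · push_neg at hgi
          have : r * g i ≤ 0 := mul_nonpos_of_nonneg_of_nonpos hr hgi
          have := hc i
          simp only [hc'_def]; linarith
      have hc'i₀ : c' i₀ = 0 := by
        simp only [hc'_def, hr_def]
        field_simp; ring
      have hsum' : ∑ i, c' i • v i = ∑ i, c i • v i := by
        have : ∀ i ∈ Finset.univ, c' i • v i = c i • v i - r • (g i • v i) := by
          intro i _; simp only [hc'_def]; rw [sub_smul, smul_smul]
        rw [Finset.sum_congr rfl this, Finset.sum_sub_distrib, ← Finset.smul_sum, hgsum,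
          smul_zero, sub_zero]
      obtain ⟨l, w, b, hb, hw, hws, hbsum⟩ :=
        IH m' (Nat.lt_succ_self _) (v ∘ i₀.succAbove) (c' ∘ i₀.succAbove)
          (fun j => hc' _)
      refine ⟨l, w, b, hb, hw, fun j => by obtain ⟨i, hi⟩ := hws j; exact ⟨i₀.succAbove i, hi⟩, ?_⟩
      rw [hbsum, ← hsum', Fin.sum_univ_succAbove (fun i => c' i • v i) i₀, hc'i₀]
      simp

lemma linearIndependent_card_le_finrank_span_of_mem {l : ℕ} {w : Fin l → E}
    (hw : LinearIndependent ℝ w) {W : Submodule ℝ E} (hmem : ∀ j, w j ∈ W) :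
    l ≤ Module.finrank ℝ W := by
  have h2 : LinearIndependent ℝ (fun j => (⟨w j, hmem j⟩ : W)) := by
    apply LinearIndependent.of_comp W.subtype
    exact hw
  simpa using h2.fintype_card_le_finrank

lemma list_sum_eq_fin_sum (L : List E) : L.sum = ∑ i : Fin L.length, L.get i := by
  conv_lhs => rw [← List.ofFn_get L]
  rw [List.sum_ofFn]

end Chunk2

section Chunk3
variable {E : Type*} [NormedAddCommGroup E] [InnerProductSpace ℝ E] [FiniteDimensional ℝ E]
variable {C F G : Set E}

lemma setDim_mono {S T : Set E} (h : S ⊆ T) : setDim S ≤ setDim T :=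
  Submodule.finrank_mono (vectorSpan_mono ℝ h)

lemma face_dim_lt (hcone : ∀ c : ℝ, 0 ≤ c → ∀ y ∈ C, c • y ∈ C) (h0 : (0 : E) ∈ C)
    (hF : IsFaceOf C F) (hG : IsFaceOf C G) (hne : F.Nonempty) (hsub : F ⊆ G)
    (hne2 : F ≠ G) : setDim F < setDim G := by
  have h0F : (0 : E) ∈ F := hF.zero_mem hcone h0 hne
  have h0G : (0 : E) ∈ G := hsub h0F
  have hlt : Submodule.span ℝ F < Submodule.span ℝ G := by
    refine lt_of_le_of_ne (Submodule.span_mono hsub) (fun heq => hne2 ?_)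
    refine subset_antisymm hsub (hF.subset_of_span_le hcone h0 hG hne ?_)
    intro g hg
    have : g ∈ Submodule.span ℝ G := Submodule.subset_span hg
    rwa [← heq] at this
  rw [setDim, setDim, vectorSpan_eq_span h0F, vectorSpan_eq_span h0G]
  exact Submodule.finrank_lt_finrank_of_lt hlt

/-- `x` is a finite sum of elements of extreme rays of `C`. -/
def SumRays (C : Set E) (x : E) : Prop :=
  ∃ L : List E, (∀ y ∈ L, ∃ R, IsExtremeRay C R ∧ y ∈ R) ∧ x = L.sum

lemma SumRays.zero : SumRays C (0 : E) := ⟨[], by simp, by simp⟩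

lemma SumRays.add {x y : E} (hx : SumRays C x) (hy : SumRays C y) : SumRays C (x + y) := by
  obtain ⟨L₁, h₁, rfl⟩ := hx
  obtain ⟨L₂, h₂, rfl⟩ := hy
  exact ⟨L₁ ++ L₂, fun y hy => (List.mem_append.mp hy).elim (h₁ y) (h₂ y),
    (List.sum_append).symm⟩

lemma SumRays.smul (hcone : ∀ c : ℝ, 0 ≤ c → ∀ y ∈ C, c • y ∈ C) (h0 : (0 : E) ∈ C)
    {c : ℝ} (hc : 0 ≤ c) {x : E} (hx : SumRays C x) : SumRays C (c • x) := by
  obtain ⟨L, hL, rfl⟩ := hx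
  refine ⟨L.map (c • ·), ?_, by rw [List.smul_sum]⟩
  intro y hy
  obtain ⟨z, hz, rfl⟩ := List.mem_map.mp hy
  obtain ⟨R, hR, hzR⟩ := hL z hz
  exact ⟨R, hR, hR.1.smul_mem hcone h0 hc hzR⟩

lemma IsExtremeRay.of_face (hF : IsFaceOf C F) {R : Set E} (hR : IsExtremeRay F R) :
    IsExtremeRay C R := ⟨hF.trans hR.1, hR.2⟩

lemma SumRays.of_subface (hF : IsFaceOf C F) {x : E} (hx : SumRays F x) : SumRays C x := by
  obtain ⟨L, hL, rfl⟩ := hx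
  exact ⟨L, fun y hy => (hL y hy).imp (fun R hR => ⟨hR.1.of_face hF, hR.2⟩), rfl⟩

lemma SumRays.isSum (hcone : ∀ c : ℝ, 0 ≤ c → ∀ y ∈ C, c • y ∈ C) (h0 : (0 : E) ∈ C)
    {x : E} (hx : SumRays C x) :
    IsSumOfExtremeRayElems C (Module.finrank ℝ (Submodule.span ℝ C)) x := by
  obtain ⟨L, hL, rfl⟩ := hx
  obtain ⟨l, w, b, hb, hw, hws, hbsum⟩ := conic_caratheodory L.length L.get (fun _ => 1)
    (fun _ => zero_le_one)
  have hwray : ∀ j, ∃ R, IsExtremeRay C R ∧ w j ∈ R := by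
    intro j
    obtain ⟨i, hi⟩ := hws j
    obtain ⟨R, hR, hmem⟩ := hL (L.get i) (List.get_mem L i)
    exact ⟨R, hR, hi ▸ hmem⟩
  refine ⟨l, ?_, fun j => b j • w j, ?_, ?_⟩
  · refine linearIndependent_card_le_finrank_span_of_mem hw (fun j => ?_)
    obtain ⟨R, hR, hmem⟩ := hwray j
    exact Submodule.subset_span (hR.1.1 hmem)
  · intro j
    obtain ⟨R, hR, hmem⟩ := hwray j
    exact ⟨R, hR, hR.1.smul_mem hcone h0 (hb j) hmem⟩
  · rw [hbsum, list_sum_eq_fin_sum L]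
    simp

end Chunk3

section Chunk4
variable {E : Type*} [NormedAddCommGroup E] [InnerProductSpace ℝ E] [FiniteDimensional ℝ E]
variable {C : Set E}

open Filter Topology

/-- Supporting-hyperplane: a point of a closed convex cone from which some direction
inside the span immediately leaves the cone lies on a proper closed exposed face. -/
lemma exists_proper_face (hC : Convex ℝ C)
    (hcone : ∀ c : ℝ, 0 ≤ c → ∀ y ∈ C, c • y ∈ C) (hclosed : IsClosed C) (h0 : (0 : E) ∈ C)
    {q y : E} (hq : q ∈ C) (hy : y ∈ Submodule.span ℝ C)
    (hout : ∀ s : ℝ, 0 < s → q + s • y ∉ C) :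
    ∃ F, IsFaceOf C F ∧ IsClosed F ∧ q ∈ F ∧ F ≠ C := by
  classical
  set V : Submodule ℝ E := Submodule.span ℝ C with hV
  set K' : Set ↥V := (Subtype.val) ⁻¹' C with hK'
  have hCV : C ⊆ (V : Set E) := Submodule.subset_span
  have hK'conv : Convex ℝ K' := hC.linear_preimage V.subtype
  have hK'closed : IsClosed K' := hclosed.preimage continuous_subtype_val
  have h0K' : (0 : ↥V) ∈ K' := by simpa [hK'] using h0
  have hspan : Submodule.span ℝ K' = (⊤ : Submodule ℝ ↥V) := by
    apply Submodule.map_injective_of_injective V.injective_subtype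
    rw [Submodule.map_span, Submodule.map_subtype_top]
    have himg : (V.subtype) '' K' = C := by
      ext a
      simp only [Set.mem_image, hK', Set.mem_preimage, Submodule.coe_subtype]
      constructor
      · rintro ⟨b, hb, rfl⟩; exact hb
      · intro ha; exact ⟨⟨a, hCV ha⟩, ha, rfl⟩
    rw [himg]
  have haff : affineSpan ℝ K' = ⊤ := by
    rw [eq_top_iff]
    intro x _
    have h0aff : (0 : ↥V) ∈ affineSpan ℝ K' := mem_affineSpan ℝ h0K'
    have : x -ᵥ (0 : ↥V) ∈ (affineSpan ℝ K').direction := by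
      rw [direction_affineSpan, vectorSpan_eq_span h0K', hspan]
      trivial
    exact (AffineSubspace.vsub_right_mem_direction_iff_mem h0aff x).mp this
  have hint : (interior K').Nonempty := by
    rw [hK'conv.interior_nonempty_iff_affineSpan_eq_top]
    exact haff
  set q' : ↥V := ⟨q, hCV hq⟩ with hq'def
  set y' : ↥V := ⟨y, hy⟩ with hy'def
  have hq'ni : q' ∉ interior K' := by
    intro hmem
    have cont : Continuous (fun s : ℝ => q' + s • y') := by fun_prop
    have htd : Tendsto (fun s : ℝ => q' + s • y') (𝓝 0) (𝓝 q') := by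
      have := cont.tendsto 0
      simpa using this
    have ev : ∀ᶠ s in 𝓝 (0 : ℝ), q' + s • y' ∈ K' :=
      (htd.eventually (isOpen_interior.eventually_mem hmem)).mono
        (fun s hs => interior_subset hs)
    have ev2 : ∀ᶠ s in 𝓝[>] (0 : ℝ), q' + s • y' ∈ K' := ev.filter_mono nhdsWithin_le_nhds
    obtain ⟨s, hsK, hs⟩ := (ev2.and eventually_mem_nhdsWithin).exists
    refine hout s hs ?_
    simpa [hK'] using hsK
  obtain ⟨f, hf⟩ := geometric_hahn_banach_open_point hK'conv.interior isOpen_interior hq'ni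
  obtain ⟨x₀, hx₀⟩ := hint
  have hfle : ∀ a ∈ K', f a ≤ f q' := by
    intro a ha
    have htend : Tendsto (fun t : ℝ => f (t • x₀ + (1 - t) • a)) (𝓝[>] 0)
        (𝓝 (f ((0:ℝ) • x₀ + (1 - 0:ℝ) • a))) := by
      apply Tendsto.mono_left _ nhdsWithin_le_nhds
      exact (f.continuous.comp (by fun_prop)).tendsto 0
    have h₀ : f ((0:ℝ) • x₀ + (1 - 0:ℝ) • a) = f a := by norm_num
    rw [h₀] at htend
    refine le_of_tendsto htend ?_
    have hIoo : Set.Ioo (0:ℝ) 1 ∈ 𝓝[>] (0:ℝ) := Ioo_mem_nhdsGT_of_mem ⟨le_rfl, by norm_num⟩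
    filter_upwards [hIoo] with t ht
    have : t • x₀ + (1 - t) • a ∈ interior K' :=
      hK'conv.combo_interior_self_mem_interior hx₀ ha ht.1 (by linarith [ht.2]) (by ring)
    exact (hf _ this).le
  set fext : E →L[ℝ] ℝ := f.comp (V.orthogonalProjectionOnto) with hfext
  have hkey : ∀ (a : E) (ha : a ∈ V), fext a = f ⟨a, ha⟩ := by
    intro a ha
    have := Submodule.orthogonalProjectionOnto_mem_subspace_eq_self (K := V) ⟨a, ha⟩
    simp only [hfext, ContinuousLinearMap.comp_apply]
    rw [show ((⟨a, ha⟩ : ↥V) : E) = a from rfl] at this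
    rw [this]
  set F : Set E := C ∩ {a | fext a = fext q} with hF
  have hfleC : ∀ a ∈ C, fext a ≤ fext q := by
    intro a ha
    rw [hkey a (hCV ha), hkey q (hCV hq)]
    exact hfle _ ha
  refine ⟨F, ⟨Set.inter_subset_left, ?_, ?_⟩, ?_, ⟨hq, rfl⟩, ?_⟩
  · exact hC.inter (convex_hyperplane (IsLinearMap.mk fext.map_add fext.map_smul) _)
  · intro x hx z hz a ha0 ha1 hm
    obtain ⟨hmC, hmf⟩ := hm
    have hx' := hfleC x hx
    have hz' := hfleC z hz
    have hcomb : a * fext x + (1 - a) * fext z = fext q := by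
      have := hmf
      simpa [map_add, map_smul, smul_eq_mul] using this
    constructor
    · refine ⟨hx, ?_⟩
      by_contra hne
      have : fext x < fext q := lt_of_le_of_ne hx' hne
      nlinarith
    · refine ⟨hz, ?_⟩
      by_contra hne
      have : fext z < fext q := lt_of_le_of_ne hz' hne
      nlinarith
  · exact hclosed.inter (isClosed_eq fext.continuous continuous_const)
  · intro heq
    have hx₀C : (x₀ : E) ∈ C := (interior_subset hx₀ : x₀ ∈ K')
    have : fext (x₀ : E) < fext q := by
      rw [hkey _ (hCV hx₀C), hkey q (hCV hq)]
      have : (⟨(x₀ : E), hCV hx₀C⟩ : ↥V) = x₀ := rfl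
      rw [this]
      exact hf _ hx₀
    have : (x₀ : E) ∈ F := heq ▸ hx₀C
    exact absurd this.2 (ne_of_lt ‹fext (x₀:E) < fext q›)

end Chunk4

section Chunk5
variable {E : Type*} [NormedAddCommGroup E] [InnerProductSpace ℝ E] [FiniteDimensional ℝ E]
variable {C : Set E}

open Filter Topology

lemma exit_point (hcone : ∀ c : ℝ, 0 ≤ c → ∀ y ∈ C, c • y ∈ C) (hclosed : IsClosed C)
    {x y : E} (hx : x ∈ C) (hyn : y ∉ C) :
    ∃ T : ℝ, 0 ≤ T ∧ x + T • y ∈ C ∧ ∀ s : ℝ, 0 < s → (x + T • y) + s • y ∉ C := by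
  set A : Set ℝ := {t : ℝ | 0 ≤ t ∧ x + t • y ∈ C} with hA
  have hA0 : (0 : ℝ) ∈ A := ⟨le_refl _, by simpa using hx⟩
  have hAclosed : IsClosed A :=
    (isClosed_Ici.preimage continuous_id).inter (hclosed.preimage (by fun_prop))
  have hAbdd : BddAbove A := by
    by_contra hbdd
    have hyC : y ∈ closure C := by
      rw [Metric.mem_closure_iff]
      intro ε hε
      obtain ⟨t, htA, htgt⟩ := not_bddAbove_iff.mp hbdd (‖x‖ / ε + 1)
      have htpos : 0 < t := by
        have : (0:ℝ) ≤ ‖x‖ / ε := div_nonneg (norm_nonneg _) hε.le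
        linarith
      refine ⟨(1/t) • (x + t • y), hcone _ (by positivity) _ htA.2, ?_⟩
      have : (1/t) • (x + t • y) = (1/t) • x + y := by
        rw [smul_add, smul_smul]
        field_simp; rw [one_smul]
      rw [this, dist_eq_norm]
      have : y - ((1/t) • x + y) = -((1/t) • x) := by abel
      rw [this, norm_neg, norm_smul, Real.norm_eq_abs,
        abs_of_pos (by positivity : (0:ℝ) < 1/t), div_mul_eq_mul_div, one_mul,
        div_lt_iff₀ htpos]
      have heq : ε * (‖x‖/ε + 1) = ‖x‖ + ε := by field_simp
      nlinarith [mul_lt_mul_of_pos_left htgt hε]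
    rw [hclosed.closure_eq] at hyC
    exact hyn hyC
  set T := sSup A with hT
  have hTA : T ∈ A := hAclosed.csSup_mem ⟨0, hA0⟩ hAbdd
  refine ⟨T, hTA.1, hTA.2, fun s hs hmem => ?_⟩
  have : T + s ∈ A := by
    refine ⟨by linarith [hTA.1], ?_⟩
    have : x + (T + s) • y = (x + T • y) + s • y := by
      rw [add_smul]; abel
    rw [this]; exact hmem
  have := le_csSup hAbdd this
  linarith

end Chunk5

section Chunk6
variable {E : Type*} [NormedAddCommGroup E] [InnerProductSpace ℝ E] [FiniteDimensional ℝ E]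

open Filter Topology

lemma zero_mem_of_pointed {C : Set E} (hpointed : C ∩ (-C) = {0}) : (0 : E) ∈ C := by
  have : (0 : E) ∈ C ∩ (-C) := by rw [hpointed]; rfl
  exact this.1

lemma face_pointed {C F : Set E} (hcone : ∀ c : ℝ, 0 ≤ c → ∀ y ∈ C, c • y ∈ C)
    (hpointed : C ∩ (-C) = {0}) (hF : IsFaceOf C F) (hne : F.Nonempty) :
    F ∩ (-F) = {0} := by
  have h0F : (0 : E) ∈ F := hF.zero_mem hcone (zero_mem_of_pointed hpointed) hne
  apply subset_antisymm
  · intro x hxmem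
    rw [← hpointed]
    exact ⟨hF.1 hxmem.1, hF.1 hxmem.2⟩
  · intro x hxmem
    rw [Set.mem_singleton_iff] at hxmem
    subst hxmem
    exact ⟨h0F, by simpa using h0F⟩

lemma sumRays_of_mem : ∀ (d : ℕ), ∀ C : Set E, Convex ℝ C →
    (∀ c : ℝ, 0 ≤ c → ∀ y ∈ C, c • y ∈ C) → IsClosed C → C ∩ (-C) = {0} →
    setDim C = d → ∀ x ∈ C, SumRays C x := by
  intro d
  induction d using Nat.strong_induction_on with
  | _ d IH =>
  intro C hC hcone hclosed hpointed hdim x hx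
  have h0 : (0 : E) ∈ C := zero_mem_of_pointed hpointed
  match d, hdim with
  | 0, hdim =>
    -- C = {0}
    have hsp : Submodule.span ℝ C = ⊥ := by
      have : Module.finrank ℝ (Submodule.span ℝ C) = 0 := by
        rw [← vectorSpan_eq_span h0]; exact hdim
      exact Submodule.finrank_eq_zero.mp this
    have : x ∈ Submodule.span ℝ C := Submodule.subset_span hx
    rw [hsp, Submodule.mem_bot] at this
    rw [this]
    exact SumRays.zero
  | 1, hdim =>
    exact ⟨[x], fun y hy => by
      rw [List.mem_singleton] at hy
      exact ⟨C, ⟨isFaceOf_self hC, hdim⟩, hy ▸ hx⟩, by simp⟩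
  | (d' + 2), hdim =>
    by_cases hx0 : x = 0
    · rw [hx0]; exact SumRays.zero
    have hrk : Module.finrank ℝ (Submodule.span ℝ C) = d' + 2 := by
      rw [← vectorSpan_eq_span h0]; exact hdim
    -- find a, b in C with b ∉ span {a}, a ≠ 0
    obtain ⟨a, ha, ha0⟩ : ∃ a ∈ C, a ≠ 0 := by
      by_contra h
      push_neg at h
      have : C ⊆ {0} := fun z hz => h z hz
      have hle : Submodule.span ℝ C ≤ ⊥ := by
        rw [← Submodule.span_zero_singleton (R := ℝ) (M := E)]
        exact Submodule.span_mono this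
      rw [le_bot_iff] at hle
      rw [hle, finrank_bot] at hrk
      omega
    obtain ⟨b, hb, hbs⟩ : ∃ b ∈ C, b ∉ Submodule.span ℝ {a} := by
      by_contra h
      push_neg at h
      have hle : Submodule.span ℝ C ≤ Submodule.span ℝ {a} := Submodule.span_le.mpr h
      have h1 : Module.finrank ℝ (Submodule.span ℝ ({a} : Set E)) = 1 :=
        finrank_span_singleton ha0
      have := Submodule.finrank_mono hle
      omega
    have hb0 : b ≠ 0 := fun h => hbs (h ▸ Submodule.zero_mem _)
    -- find y on segment [a, -b] outside C ∪ -C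
    set p : ℝ → E := fun t => (1 - t) • a - t • b with hp
    have hpcont : Continuous p := by fun_prop
    obtain ⟨t₁, ht₁, hync, hynnc⟩ : ∃ t ∈ Set.Icc (0:ℝ) 1, p t ∉ C ∧ p t ∉ (-C) := by
      by_contra hcov
      push_neg at hcov
      set A' : Set ℝ := Set.Icc 0 1 ∩ p ⁻¹' C with hA'
      have hA'closed : IsClosed A' := isClosed_Icc.inter (hclosed.preimage hpcont)
      have hA'0 : (0:ℝ) ∈ A' := ⟨⟨le_refl _, zero_le_one⟩, by simp [hp, ha]⟩
      have hA'bdd : BddAbove A' := ⟨1, fun t ht => ht.1.2⟩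
      set ts := sSup A' with hts
      have htsA : ts ∈ A' := hA'closed.csSup_mem ⟨0, hA'0⟩ hA'bdd
      have hts1 : ts ≤ 1 := htsA.1.2
      have hptsC : p ts ∈ C := htsA.2
      have hptsnC : p ts ∈ -C := by
        rcases eq_or_lt_of_le hts1 with heq | hlt
        · -- ts = 1 : p 1 = -b
          exfalso
          have : p 1 ∈ C := by rw [← heq]; exact hptsC
          have hbneg : b ∈ C ∩ (-C) := ⟨hb, by simpa [hp] using this⟩
          rw [hpointed] at hbneg
          exact hb0 hbneg
        · have hsub : Set.Ioc ts 1 ⊆ {t | p t ∈ -C} := by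
            intro t ht
            have htI : t ∈ Set.Icc (0:ℝ) 1 := ⟨le_trans htsA.1.1 ht.1.le, ht.2⟩
            have htnA : t ∉ A' := fun hmem => absurd (le_csSup hA'bdd hmem) (not_le.mpr ht.1)
            have : p t ∉ C := fun hc => htnA ⟨htI, hc⟩
            exact hcov t htI this
          have hclosed' : IsClosed {t : ℝ | p t ∈ -C} := (hclosed.neg).preimage hpcont
          have : Set.Icc ts 1 ⊆ {t | p t ∈ -C} := by
            rw [← closure_Ioc (ne_of_lt hlt)]
            exact hclosed'.closure_subset_iff.mpr hsub
          exact this ⟨le_refl _, hts1⟩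
      have : p ts ∈ C ∩ (-C) := ⟨hptsC, hptsnC⟩
      rw [hpointed, Set.mem_singleton_iff] at this
      -- (1 - ts) • a = ts • b, contradiction with b ∉ span {a}
      have hts0 : ts ≠ 0 := by
        intro h
        rw [h] at this
        simp [hp] at this
        exact ha0 this
      have htspos : 0 < ts := lt_of_le_of_ne htsA.1.1 (Ne.symm hts0)
      have hbval : b = ((1 - ts) / ts) • a := by
        have h1 : (1 - ts) • a - ts • b = 0 := by simpa [hp] using this
        have h2 : (1 - ts) • a = ts • b := sub_eq_zero.mp h1
        rw [div_eq_inv_mul, ← smul_smul, h2, smul_smul, inv_mul_cancel₀ hts0, one_smul]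
      exact hbs (hbval ▸ Submodule.smul_mem _ _ (Submodule.mem_span_singleton_self a))
    set y := p t₁ with hy
    have hy0 : y ≠ 0 := fun h => hync (h ▸ h0)
    have hyspan : y ∈ Submodule.span ℝ C :=
      sub_mem (Submodule.smul_mem _ _ (Submodule.subset_span ha))
        (Submodule.smul_mem _ _ (Submodule.subset_span hb))
    have hnyc : -y ∉ C := fun h => hynnc (Set.mem_neg.mpr (by simpa using h))
    -- exit points in directions y and -y
    obtain ⟨T₁, hT₁0, hq₁C, hq₁out⟩ := exit_point hcone hclosed hx hync
    obtain ⟨T₂, hT₂0, hq₂C, hq₂out⟩ := exit_point hcone hclosed hx hnyc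
    set q₁ := x + T₁ • y with hq₁
    set q₂ := x + T₂ • (-y) with hq₂
    -- proper faces containing q₁, q₂
    obtain ⟨F₁, hF₁, hF₁closed, hq₁F, hF₁ne⟩ :=
      exists_proper_face hC hcone hclosed h0 hq₁C hyspan hq₁out
    obtain ⟨F₂, hF₂, hF₂closed, hq₂F, hF₂ne⟩ :=
      exists_proper_face hC hcone hclosed h0 hq₂C (neg_mem hyspan) hq₂out
    have hrec : ∀ (F : Set E), IsFaceOf C F → IsClosed F → F ≠ C → ∀ z ∈ F, SumRays C z := by
      intro F hF hFclosed hFne z hz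
      have hFne' : F.Nonempty := ⟨z, hz⟩
      have hdimlt : setDim F < d' + 2 := by
        rw [← hdim]
        exact face_dim_lt hcone h0 hF (isFaceOf_self hC) hFne' hF.1 hFne
      have hFcone : ∀ c : ℝ, 0 ≤ c → ∀ w ∈ F, c • w ∈ F :=
        fun c hc w hw => hF.smul_mem hcone h0 hc hw
      have := IH (setDim F) hdimlt F hF.2.1 hFcone hFclosed
        (face_pointed hcone hpointed hF hFne') rfl z hz
      exact this.of_subface hF
    have hs₁ : SumRays C q₁ := hrec F₁ hF₁ hF₁closed hF₁ne q₁ hq₁F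
    have hs₂ : SumRays C q₂ := hrec F₂ hF₂ hF₂closed hF₂ne q₂ hq₂F
    -- combine
    rcases eq_or_lt_of_le (add_nonneg hT₁0 hT₂0) with hT | hT
    · -- T₁ = T₂ = 0, x = q₁
      have hT₁ : T₁ = 0 := by linarith
      have : x = q₁ := by rw [hq₁, hT₁]; simp
      rw [this]; exact hs₁
    · have hxcomb : x = (T₂ / (T₁ + T₂)) • q₁ + (T₁ / (T₁ + T₂)) • q₂ := by
        rw [hq₁, hq₂]
        have hne : T₁ + T₂ ≠ 0 := ne_of_gt hT
        field_simp
        match_scalars <;> field_simp <;> ring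
      rw [hxcomb]
      exact (hs₁.smul hcone h0 (div_nonneg hT₂0 hT.le)).add
        (hs₂.smul hcone h0 (div_nonneg hT₁0 hT.le))

end Chunk6

section Chunk7
variable {E : Type*} [NormedAddCommGroup E] [InnerProductSpace ℝ E] [FiniteDimensional ℝ E]

lemma sum_mem_span_rays {C : Set E} :
    ∀ L : List E, (∀ y ∈ L, ∃ R, IsExtremeRay C R ∧ y ∈ R) →
    ∃ T : Set (Set E), T.Finite ∧ (∀ R ∈ T, IsExtremeRay C R) ∧
      L.sum ∈ Submodule.span ℝ (⋃₀ T) := by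
  intro L
  induction L with
  | nil => exact fun _ => ⟨∅, Set.finite_empty, by simp, by simp⟩
  | cons a L ih =>
    intro h
    obtain ⟨T, hTfin, hTray, hTmem⟩ := ih (fun y hy => h y (List.mem_cons_of_mem a hy))
    obtain ⟨R, hR, haR⟩ := h a List.mem_cons_self
    refine ⟨insert R T, hTfin.insert R, ?_, ?_⟩
    · rintro S (rfl | hS)
      exacts [hR, hTray S hS]
    · rw [List.sum_cons]
      refine Submodule.add_mem _ ?_ ?_
      · exact Submodule.subset_span (Set.mem_sUnion.mpr ⟨R, Set.mem_insert _ _, haR⟩)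
      · exact Submodule.span_mono (Set.sUnion_mono (Set.subset_insert _ _)) hTmem

lemma ray_span_finrank_le {K R : Set E} (hcone : ∀ c : ℝ, 0 ≤ c → ∀ y ∈ K, c • y ∈ K)
    (h0 : (0 : E) ∈ K) (hR : IsExtremeRay K R) :
    Module.finrank ℝ (Submodule.span ℝ R) ≤ 1 := by
  have hne : R.Nonempty := by
    by_contra h
    rw [Set.not_nonempty_iff_eq_empty] at h
    have : setDim R = 0 := by
      rw [h, setDim, vectorSpan_empty, finrank_bot]
    rw [hR.2] at this; omega
  have h0R : (0 : E) ∈ R := hR.1.zero_mem hcone h0 hne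
  rw [← vectorSpan_eq_span h0R, ← setDim, hR.2]

lemma sum_mem_span_rays_card {K : Set E} (hcone : ∀ c : ℝ, 0 ≤ c → ∀ y ∈ K, c • y ∈ K)
    (h0 : (0 : E) ∈ K) :
    ∀ (m : ℕ) (f : Fin m → E), (∀ i, ∃ R, IsExtremeRay K R ∧ f i ∈ R) →
    ∃ T : Set (Set E), T.Finite ∧ (∀ R ∈ T, IsExtremeRay K R) ∧
      (∑ i, f i) ∈ Submodule.span ℝ (⋃₀ T) ∧
      Module.finrank ℝ (Submodule.span ℝ (⋃₀ T)) ≤ m := by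
  intro m
  induction m with
  | zero => exact fun _ _ => ⟨∅, Set.finite_empty, by simp, by simp, by
      simp [Submodule.span_empty, finrank_bot]⟩
  | succ m ih =>
    intro f h
    obtain ⟨T, hTfin, hTray, hTmem, hTrank⟩ := ih (f ∘ Fin.succ) (fun i => h i.succ)
    obtain ⟨R, hR, h0R⟩ := h 0
    refine ⟨insert R T, hTfin.insert R, ?_, ?_, ?_⟩
    · rintro S (rfl | hS)
      exacts [hR, hTray S hS]
    · rw [Fin.sum_univ_succ]
      refine Submodule.add_mem _ ?_ ?_
      · exact Submodule.subset_span (Set.mem_sUnion.mpr ⟨R, Set.mem_insert _ _, h0R⟩)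
      · exact Submodule.span_mono (Set.sUnion_mono (Set.subset_insert _ _)) hTmem
    · have heq : Submodule.span ℝ (⋃₀ insert R T) =
          Submodule.span ℝ R ⊔ Submodule.span ℝ (⋃₀ T) := by
        rw [Set.sUnion_insert, Submodule.span_union]
      rw [heq]
      calc Module.finrank ℝ ↥(Submodule.span ℝ R ⊔ Submodule.span ℝ (⋃₀ T)) ≤
          Module.finrank ℝ (Submodule.span ℝ R) + Module.finrank ℝ (Submodule.span ℝ (⋃₀ T)) :=
            Submodule.finrank_add_le_finrank_add_finrank _ _
        _ ≤ 1 + m := add_le_add (ray_span_finrank_le hcone h0 hR) hTrank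
        _ = m + 1 := by omega

/-- The interior of the cone inside its span is nonempty. -/
lemma interior_preimage_nonempty {C : Set E} (hC : Convex ℝ C) (h0 : (0 : E) ∈ C) :
    (interior ((Subtype.val : ↥(Submodule.span ℝ C) → E) ⁻¹' C)).Nonempty := by
  set V : Submodule ℝ E := Submodule.span ℝ C with hV
  set K' : Set ↥V := (Subtype.val) ⁻¹' C with hK'
  have hCV : C ⊆ (V : Set E) := Submodule.subset_span
  have hK'conv : Convex ℝ K' := hC.linear_preimage V.subtype
  have h0K' : (0 : ↥V) ∈ K' := by simpa [hK'] using h0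
  have hspan : Submodule.span ℝ K' = (⊤ : Submodule ℝ ↥V) := by
    apply Submodule.map_injective_of_injective V.injective_subtype
    rw [Submodule.map_span, Submodule.map_subtype_top]
    have himg : (V.subtype) '' K' = C := by
      ext a
      simp only [Set.mem_image, hK', Set.mem_preimage, Submodule.coe_subtype]
      constructor
      · rintro ⟨b, hb, rfl⟩; exact hb
      · intro ha; exact ⟨⟨a, hCV ha⟩, ha, rfl⟩
    rw [himg]
  have haff : affineSpan ℝ K' = ⊤ := by
    rw [eq_top_iff]
    intro x _
    have h0aff : (0 : ↥V) ∈ affineSpan ℝ K' := mem_affineSpan ℝ h0K'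
    have : x -ᵥ (0 : ↥V) ∈ (affineSpan ℝ K').direction := by
      rw [direction_affineSpan, vectorSpan_eq_span h0K', hspan]
      trivial
    exact (AffineSubspace.vsub_right_mem_direction_iff_mem h0aff x).mp this
  rw [hK'conv.interior_nonempty_iff_affineSpan_eq_top]
  exact haff

end Chunk7

section Chunk8
variable {E : Type*} [NormedAddCommGroup E] [InnerProductSpace ℝ E] [FiniteDimensional ℝ E]
variable {K : Set E}

lemma isFaceOf_zero (hcone : ∀ c : ℝ, 0 ≤ c → ∀ y ∈ K, c • y ∈ K)
    (hpointed : K ∩ (-K) = {0}) : IsFaceOf K ({0} : Set E) := by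
  have h0 := zero_mem_of_pointed hpointed
  refine ⟨by simpa using h0, convex_singleton 0, ?_⟩
  intro x hx y hy a ha0 ha1 hm
  rw [Set.mem_singleton_iff] at hm
  have hax : a • x ∈ K ∩ (-K) := by
    refine ⟨hcone a ha0.le x hx, ?_⟩
    rw [Set.mem_neg]
    have h := eq_neg_of_add_eq_zero_right hm
    rw [← h]
    exact hcone (1 - a) (by linarith) y hy
  rw [hpointed, Set.mem_singleton_iff] at hax
  have hx0 : x = 0 := by
    rcases smul_eq_zero.mp hax with h | h
    · exact absurd h (ne_of_gt ha0)
    · exact h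
  have hy0 : y = 0 := by
    rw [hx0, smul_zero, zero_add] at hm
    rcases smul_eq_zero.mp hm with h | h
    · exact absurd h (by intro h'; linarith : (1 - a) ≠ 0)
    · exact h
  exact ⟨hx0, hy0⟩

lemma setDim_zero_singleton : setDim ({0} : Set E) = 0 := by
  rw [setDim, vectorSpan_singleton, finrank_bot]

/-- The countable collection of spans of finite sets of extreme rays. -/
def raySpans (K : Set E) : Set (Submodule ℝ E) :=
  (fun T => Submodule.span ℝ (⋃₀ T)) '' {T | T.Finite ∧ T ⊆ {R | IsExtremeRay K R}}

lemma raySpans_countable (hcount : {R : Set E | IsExtremeRay K R}.Countable) :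
    (raySpans K).Countable :=
  (Set.countable_setOf_finite_subset hcount).image _

lemma carath_lower (hC : Convex ℝ K)
    (hcone : ∀ c : ℝ, 0 ≤ c → ∀ y ∈ K, c • y ∈ K) (hclosed : IsClosed K)
    (hpointed : K ∩ (-K) = {0})
    (hcount : {R : Set E | IsExtremeRay K R}.Countable) {j : ℕ}
    (hj : ∀ x ∈ K, IsSumOfExtremeRayElems K j x) : setDim K ≤ j := by
  by_contra hlt
  push_neg at hlt
  have h0 := zero_mem_of_pointed hpointed
  set V := Submodule.span ℝ K with hV
  have hdV : Module.finrank ℝ V = setDim K := by rw [setDim, vectorSpan_eq_span h0]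
  set 𝒮 : Set (Submodule ℝ E) := {W ∈ raySpans K | Module.finrank ℝ W ≤ j} with h𝒮
  have h𝒮count : 𝒮.Countable := (raySpans_countable hcount).mono (Set.sep_subset _ _)
  haveI := h𝒮count.to_subtype
  have hproper : ∀ (W : ↥𝒮), (W.val).comap V.subtype ≠ ⊤ := by
    intro W heq
    have hle : V ≤ W.val := by
      intro v hv
      have : (⟨v, hv⟩ : ↥V) ∈ (W.val).comap V.subtype := by rw [heq]; trivial
      simpa [Submodule.mem_comap] using this
    have h1 := Submodule.finrank_mono hle
    have h2 := W.prop.2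
    omega
  obtain ⟨z', hz'int, hz'avoid⟩ := exists_avoid_subspaces (ι := ↥𝒮)
    (interior ((Subtype.val : ↥V → E) ⁻¹' K)) isOpen_interior
    (interior_preimage_nonempty hC h0)
    (fun W => (W.val).comap V.subtype) hproper
  have hz'K : (z' : E) ∈ K := (interior_subset hz'int :)
  obtain ⟨m, hm, f, hf, hsum⟩ := hj _ hz'K
  obtain ⟨T, hTfin, hTray, hmem, hrank⟩ := sum_mem_span_rays_card hcone h0 m f hf
  have hW𝒮 : Submodule.span ℝ (⋃₀ T) ∈ 𝒮 :=
    ⟨⟨T, ⟨hTfin, hTray⟩, rfl⟩, le_trans hrank hm⟩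
  exact hz'avoid ⟨_, hW𝒮⟩ (by simpa [Submodule.mem_comap] using hsum ▸ hmem)

end Chunk8

section Chunk9
variable {E : Type*} [NormedAddCommGroup E] [InnerProductSpace ℝ E] [FiniteDimensional ℝ E]
variable {K : Set E}

/-- Key structural lemma: a pointed closed cone with countably many extreme rays and
positive dimension has a closed nonempty face of dimension one less. -/
lemma exists_face_dim_pred (hC : Convex ℝ K)
    (hcone : ∀ c : ℝ, 0 ≤ c → ∀ y ∈ K, c • y ∈ K) (hclosed : IsClosed K)
    (hpointed : K ∩ (-K) = {0})
    (hcount : {R : Set E | IsExtremeRay K R}.Countable)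
    (hd : 1 ≤ setDim K) :
    ∃ F, IsFaceOf K F ∧ IsClosed F ∧ F.Nonempty ∧ setDim F + 1 = setDim K := by
  have h0 := zero_mem_of_pointed hpointed
  set d := setDim K with hd_def
  rcases eq_or_lt_of_le hd with hd1 | hd2
  · -- d = 1 : take F = {0}
    exact ⟨{0}, isFaceOf_zero hcone hpointed, isClosed_singleton, ⟨0, rfl⟩, by
      rw [setDim_zero_singleton, ← hd1]⟩
  -- now 2 ≤ d
  by_contra hno
  push_neg at hno
  have hsmall : ∀ F, IsFaceOf K F → IsClosed F → F ≠ K → F.Nonempty → setDim F ≤ d - 2 := by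
    intro F hF hFc hFne hFne'
    have h1 : setDim F < d := face_dim_lt hcone h0 hF (isFaceOf_self hC) hFne' hF.1 hFne
    have h2 := hno F hF hFc hFne'
    omega
  set V := Submodule.span ℝ K with hV
  have hdV : Module.finrank ℝ V = d := by rw [hd_def, setDim, vectorSpan_eq_span h0]
  set 𝒮 : Set (Submodule ℝ E) := {W ∈ raySpans K | Module.finrank ℝ W ≤ d - 2} with h𝒮
  have h𝒮count : 𝒮.Countable := (raySpans_countable hcount).mono (Set.sep_subset _ _)
  haveI := h𝒮count.to_subtype
  have hproper : ∀ (W : ↥𝒮), (W.val).comap V.subtype ≠ ⊤ := by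
    intro W heq
    have hle : V ≤ W.val := by
      intro v hv
      have : (⟨v, hv⟩ : ↥V) ∈ (W.val).comap V.subtype := by rw [heq]; trivial
      simpa [Submodule.mem_comap] using this
    have h1 := Submodule.finrank_mono hle
    have h2 := W.prop.2
    omega
  -- choose z in the relative interior avoiding all members of 𝒮
  obtain ⟨z', hz'int, hz'avoid⟩ := exists_avoid_subspaces (ι := ↥𝒮)
    (interior ((Subtype.val : ↥V → E) ⁻¹' K)) isOpen_interior
    (interior_preimage_nonempty hC h0)
    (fun W => (W.val).comap V.subtype) hproper
  set z : E := (z' : E) with hz_def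
  have hzK : z ∈ K := (interior_subset hz'int :)
  have hzavoid : ∀ W ∈ 𝒮, z ∉ W := by
    intro W hW hzW
    exact hz'avoid ⟨W, hW⟩ (by simpa [Submodule.mem_comap] using hzW)
  have hz0 : z ≠ 0 := by
    intro h
    refine hzavoid ⊥ ⟨⟨∅, ⟨Set.finite_empty, by simp⟩, by simp⟩, by simp [finrank_bot]⟩ ?_
    rw [h]; exact Submodule.zero_mem _
  have hnzK : -z ∉ K := by
    intro hmem
    have : z ∈ K ∩ (-K) := ⟨hzK, by rwa [Set.mem_neg]⟩
    rw [hpointed, Set.mem_singleton_iff] at this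
    exact hz0 this
  -- pick ε with ball(-z, ε) ∩ K = ∅
  obtain ⟨ε, hε, hball⟩ := Metric.isOpen_iff.mp hclosed.isOpen_compl (-z) hnzK
  -- choose w in the ε-ball of V avoiding all W ⊔ span{z}
  have hproper2 : ∀ (W : ↥𝒮), (W.val ⊔ Submodule.span ℝ {z}).comap V.subtype ≠ ⊤ := by
    intro W heq
    have hle : V ≤ W.val ⊔ Submodule.span ℝ {z} := by
      intro v hv
      have : (⟨v, hv⟩ : ↥V) ∈ (W.val ⊔ Submodule.span ℝ {z}).comap V.subtype := by
        rw [heq]; trivial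
      simpa [Submodule.mem_comap] using this
    have h1 := Submodule.finrank_mono hle
    have h2 : Module.finrank ℝ ↥(W.val ⊔ Submodule.span ℝ {z}) ≤
        Module.finrank ℝ W.val + Module.finrank ℝ (Submodule.span ℝ {z}) :=
      Submodule.finrank_add_le_finrank_add_finrank _ _
    have h3 := W.prop.2
    have h4 : Module.finrank ℝ (Submodule.span ℝ ({z} : Set E)) = 1 := finrank_span_singleton hz0
    omega
  obtain ⟨w', hw'ball, hw'avoid⟩ := exists_avoid_subspaces (ι := ↥𝒮)
    (Metric.ball (0 : ↥V) ε) Metric.isOpen_ball ⟨0, Metric.mem_ball_self hε⟩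
    (fun W => (W.val ⊔ Submodule.span ℝ {z}).comap V.subtype) hproper2
  set w : E := (w' : E) with hw_def
  have hwnorm : ‖w‖ < ε := by
    have h1 := Metric.mem_ball.mp hw'ball
    rw [dist_zero_right] at h1
    exact h1
  have hwz : w - z ∉ K := by
    intro hmem
    have : w - z ∈ Metric.ball (-z) ε := by
      rw [Metric.mem_ball, dist_eq_norm]
      simpa using hwnorm
    exact hball this hmem
  -- exit point from z in direction w - z
  obtain ⟨T, hT0, hqC, hqout⟩ := exit_point hcone hclosed hzK hwz
  set q : E := z + T • (w - z) with hq_def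
  have hyspan : w - z ∈ V := sub_mem w'.prop z'.prop
  obtain ⟨F, hF, hFclosed, hqF, hFne⟩ :=
    exists_proper_face hC hcone hclosed h0 hqC hyspan hqout
  have hFdim : setDim F ≤ d - 2 := hsmall F hF hFclosed hFne ⟨q, hqF⟩
  -- decompose q into extreme rays of F
  have hFcone : ∀ c : ℝ, 0 ≤ c → ∀ u ∈ F, c • u ∈ F :=
    fun c hc u hu => hF.smul_mem hcone h0 hc hu
  have h0F : (0 : E) ∈ F := hF.zero_mem hcone h0 ⟨q, hqF⟩
  obtain ⟨L, hL, hLsum⟩ := sumRays_of_mem (setDim F) F hF.2.1 hFcone hFclosed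
    (face_pointed hcone hpointed hF ⟨q, hqF⟩) rfl q hqF
  obtain ⟨Tset, hTfin, hTray, hTmem⟩ := sum_mem_span_rays L hL
  set W := Submodule.span ℝ (⋃₀ Tset) with hW_def
  have hqW : q ∈ W := by rw [hLsum]; exact hTmem
  have hWsub : W ≤ Submodule.span ℝ F := by
    apply Submodule.span_le.mpr
    rintro u ⟨R, hR, huR⟩
    exact Submodule.subset_span ((hTray R hR).1.1 huR)
  have hWrank : Module.finrank ℝ W ≤ d - 2 := by
    have h1 := Submodule.finrank_mono hWsub
    have h2 : Module.finrank ℝ (Submodule.span ℝ F) = setDim F := by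
      rw [setDim, vectorSpan_eq_span h0F]
    omega
  have hW𝒮 : W ∈ 𝒮 := ⟨⟨Tset, ⟨hTfin, fun R hR => (hTray R hR).of_face hF⟩, rfl⟩, hWrank⟩
  -- derive contradiction
  have hT0' : T ≠ 0 := by
    intro h
    apply hzavoid W hW𝒮
    rw [← show q = z by rw [hq_def, h]; simp]
    exact hqW
  have hTpos : 0 < T := lt_of_le_of_ne hT0 (Ne.symm hT0')
  have hwmem : w ∈ W ⊔ Submodule.span ℝ {z} := by
    have hzmem : z ∈ (W ⊔ Submodule.span ℝ {z} : Submodule ℝ E) :=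
      Submodule.mem_sup_right (Submodule.mem_span_singleton_self z)
    have hqmem : q ∈ (W ⊔ Submodule.span ℝ {z} : Submodule ℝ E) := Submodule.mem_sup_left hqW
    have : w = T⁻¹ • (q + (T - 1) • z) := by
      rw [hq_def]
      match_scalars <;> (field_simp; try ring)
    rw [this]
    exact Submodule.smul_mem _ _ (Submodule.add_mem _ hqmem (Submodule.smul_mem _ _ hzmem))
  exact hw'avoid ⟨W, hW𝒮⟩ (by simpa [Submodule.mem_comap] using hwmem)

end Chunk9

section Chunk10
variable {E : Type*} [NormedAddCommGroup E] [InnerProductSpace ℝ E] [FiniteDimensional ℝ E]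
variable {K : Set E}

lemma chain_le (hC : Convex ℝ K) (hcone : ∀ c : ℝ, 0 ≤ c → ∀ y ∈ K, c • y ∈ K)
    (hpointed : K ∩ (-K) = {0}) {m : ℕ}
    (hm : HasFaceChainOfLength K m) : m ≤ setDim K + 1 := by
  have h0 := zero_mem_of_pointed hpointed
  obtain ⟨c, hanti, hface⟩ := hm
  have hg : ∀ i : Fin m, setDim (c i) ≤ setDim K := fun i => setDim_mono (hface i).1.1
  have hinj : Function.Injective
      (fun i : Fin m => (⟨setDim (c i), Nat.lt_succ_of_le (hg i)⟩ : Fin (setDim K + 1))) := by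
    intro i j hij
    simp only [Fin.mk.injEq] at hij
    by_contra hne
    rcases lt_or_gt_of_ne hne with h | h
    · have hss := hanti h
      have := face_dim_lt hcone h0 (hface j).1 (hface i).1 (hface j).2 hss.le hss.ne
      omega
    · have hss := hanti h
      have := face_dim_lt hcone h0 (hface i).1 (hface j).1 (hface i).2 hss.le hss.ne
      omega
  have := Fintype.card_le_of_injective _ hinj
  simpa using this

lemma chain_exists : ∀ (d : ℕ) (K : Set E), Convex ℝ K →
    (∀ c : ℝ, 0 ≤ c → ∀ y ∈ K, c • y ∈ K) → IsClosed K → K ∩ (-K) = {0} →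
    {R : Set E | IsExtremeRay K R}.Countable → setDim K = d →
    HasFaceChainOfLength K (d + 1) := by
  intro d
  induction d using Nat.strong_induction_on with
  | _ d IH =>
  intro K hC hcone hclosed hpointed hcount hdim
  have h0 := zero_mem_of_pointed hpointed
  match d, hdim with
  | 0, hdim =>
    refine ⟨fun _ => K, ?_, fun i => ⟨isFaceOf_self hC, ⟨0, h0⟩⟩⟩
    intro i j hij
    have h1 := i.isLt
    have h2 := j.isLt
    have := Fin.lt_iff_val_lt_val.mp hij
    omega
  | (d' + 1), hdim =>
    obtain ⟨F, hF, hFclosed, hFne, hFdim⟩ :=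
      exists_face_dim_pred hC hcone hclosed hpointed hcount (by omega)
    have hFdim' : setDim F = d' := by omega
    have hFcone : ∀ c : ℝ, 0 ≤ c → ∀ u ∈ F, c • u ∈ F :=
      fun c hc u hu => hF.smul_mem hcone h0 hc hu
    have hFcount : {R : Set E | IsExtremeRay F R}.Countable :=
      hcount.mono (fun R hR => hR.of_face hF)
    obtain ⟨c', hanti', hface'⟩ := IH d' (by omega) F hF.2.1 hFcone hFclosed
      (face_pointed hcone hpointed hF hFne) hFcount hFdim'
    have hFssub : F ⊂ K := by
      refine ssubset_of_subset_of_ne hF.1 ?_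
      intro he
      rw [he] at hFdim
      omega
    refine ⟨Fin.cases K c', ?_, ?_⟩
    · intro i j hij
      rcases Fin.eq_zero_or_eq_succ j with rfl | ⟨j', rfl⟩
      · exact absurd hij (Fin.not_lt_zero i)
      · rcases Fin.eq_zero_or_eq_succ i with rfl | ⟨i', rfl⟩
        · simp only [Fin.cases_zero, Fin.cases_succ]
          exact lt_of_le_of_lt (hface' j').1.1 hFssub
        · simp only [Fin.cases_succ]
          exact hanti' (by exact_mod_cast Fin.succ_lt_succ_iff.mp hij)
    · intro i
      rcases Fin.eq_zero_or_eq_succ i with rfl | ⟨i', rfl⟩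
      · simpa using ⟨isFaceOf_self hC, ⟨0, h0⟩⟩
      · simp only [Fin.cases_succ]
        exact ⟨hF.trans (hface' i').1, (hface' i').2⟩

end Chunk10

/-- If the set of extreme rays of a pointed closed convex cone `K` is
countable, then the Carathéodory number of `K` equals `dim K` and the longest chain of
nonempty faces of `K` has length `dim K + 1`. -/
theorem caratheodory_stmt13 {n : ℕ} (K : Set (EuclideanSpace ℝ (Fin n)))
    (hconv : Convex ℝ K)
    (hcone : ∀ (c : ℝ), 0 ≤ c → ∀ y ∈ K, c • y ∈ K)
    (hclosed : IsClosed K)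
    (hpointed : K ∩ (-K) = {0})
    (hcount : {R : Set (EuclideanSpace ℝ (Fin n)) | IsExtremeRay K R}.Countable) :
    IsCaratheodoryNumber K (setDim K) ∧ IsLongestFaceChainLength K (setDim K + 1) := by
  have h0 := zero_mem_of_pointed hpointed
  have heq : setDim K = Module.finrank ℝ (Submodule.span ℝ K) := by
    rw [setDim, vectorSpan_eq_span h0]
  refine ⟨⟨?_, ?_⟩, ?_, ?_⟩
  · intro x hx
    have := (sumRays_of_mem (setDim K) K hconv hcone hclosed hpointed rfl x hx).isSum hcone h0
    rwa [← heq] at this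
  · exact fun j hj => carath_lower hconv hcone hclosed hpointed hcount hj
  · exact chain_exists (setDim K) K hconv hcone hclosed hpointed hcount rfl
  · exact fun m hm => chain_le hconv hcone hpointed hm
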